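/- arXiv:2009.14091 — 4 statements merged into one kernel-verified Lean document; each statement's English description precedes it below -/
import Mathlib

section
/- Let G be a finite p-group for an odd prime p, R a commutative ring, and M an RG-module admitting an R-basis A such that G·A ⊆ A ∪ (−A). Then M admits an R-basis that is permuted by G, i.e. M is a permutation RG-module. -/
/-!
A sign-permutation basis `b` gives, for each `g`, indices `σ g i` and signs `ε g i = ±1` with
`g • b i = ε g i • b (σ g i)`. When `2 ≠ 0` in `R` these data are unique, so `ε` is a 1-cocycle
of `G` with values in the `±1`-valued functions on the index set. As `G` has odd order and `±1`
has exponent two, `ε` is the coboundary of `δ i = ∏ g, ε g i`, and the rescaled basis `δ i • b i`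
is permuted by `G`. When `2 = 0` in `R`, signs are invisible and `b` itself is permuted.
-/

theorem prod_cocycle_apply_of_odd_card {G ι A : Type*} [Group G] [Fintype G] [CommGroup A]
    (hG : Odd (Fintype.card G)) (hA : ∀ a : A, a ^ 2 = 1)
    {σ : G → ι → ι} {ε : G → ι → A} (hε : ∀ g h i, ε (g * h) i = ε h i * ε g (σ h i))
    (h : G) (i : ι) : ∏ g, ε g (σ h i) = (∏ g, ε g i) * ε h i := by
  have hterm : ∀ g, ε g (σ h i) = ε (g * h) i * ε h i := fun g => by
    rw [hε, mul_comm (ε h i), mul_assoc, ← sq, hA, mul_one]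
  obtain ⟨k, hk⟩ := hG
  calc ∏ g, ε g (σ h i) = (∏ g, ε (g * h) i) * ε h i ^ Fintype.card G := by
        rw [Finset.prod_congr rfl fun g _ => hterm g, Finset.prod_mul_distrib, Finset.prod_const,
          Finset.card_univ]
    _ = (∏ g, ε g i) * ε h i := by
        rw [Fintype.prod_equiv (Equiv.mulRight h) (fun g => ε (g * h) i) (fun g => ε g i)
          fun _ => rfl, hk, pow_succ, pow_mul, hA, one_pow, one_mul]

theorem neg_eq_self_of_two_eq_zero {R M : Type*} [Semiring R] [AddCommGroup M] [Module R M]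
    (h2 : (2 : R) = 0) (x : M) : -x = x :=
  neg_eq_of_add_eq_zero_left <| by rw [← two_smul R, h2, zero_smul]

namespace Module.Basis

variable {ι R M : Type*} [Ring R] [AddCommGroup M] [Module R M] (b : Basis ι R M)

theorem two_eq_zero_of_eq_neg {j k : ι} (h : b j = -b k) : (2 : R) = 0 := by
  have hsum : b.repr (b j + b k) j = 0 := by
    rw [h, neg_add_cancel, map_zero, Finsupp.zero_apply]
  rw [map_add, Finsupp.add_apply, b.repr_self, b.repr_self, Finsupp.single_eq_same] at hsum
  by_cases hkj : k = j
  · rwa [hkj, Finsupp.single_eq_same, one_add_one_eq_two] at hsum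
  · rw [Finsupp.single_eq_of_ne' hkj, add_zero] at hsum
    rw [← one_add_one_eq_two, hsum, add_zero]

theorem eq_and_eq_of_units_int_smul_eq (h2 : (2 : R) ≠ 0) {j k : ι} {s t : ℤˣ}
    (h : s • b j = t • b k) : j = k ∧ s = t := by
  have := nontrivial_of_ne _ _ h2
  rcases Int.units_eq_one_or s with rfl | rfl <;> rcases Int.units_eq_one_or t with rfl | rfl <;>
    simp only [one_smul, Units.neg_smul, neg_inj] at h
  · exact ⟨b.injective h, rfl⟩
  · exact absurd (b.two_eq_zero_of_eq_neg h) h2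
  · exact absurd (b.two_eq_zero_of_eq_neg h.symm) h2
  · exact ⟨b.injective h, rfl⟩

theorem units_int_cocycle_of_smul_eq {G : Type*} [Group G] [DistribMulAction G M] (h2 : (2 : R) ≠ 0)
    {σ : G → ι → ι} {ε : G → ι → ℤˣ} (hb : ∀ g i, g • b i = ε g i • b (σ g i))
    (g h : G) (i : ι) : ε (g * h) i = ε h i * ε g (σ h i) := by
  refine (b.eq_and_eq_of_units_int_smul_eq h2 (j := σ (g * h) i) (k := σ g (σ h i)) ?_).2
  rw [← hb, mul_smul, hb, smul_comm, hb, smul_smul]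

noncomputable def unitsIntSMul (δ : ι → ℤˣ) : Basis ι R M :=
  b.unitsSMul fun i => Units.map (Int.castRingHom R).toMonoidHom (δ i)

theorem unitsIntSMul_apply (δ : ι → ℤˣ) (i : ι) : b.unitsIntSMul δ i = δ i • b i := by
  rw [unitsIntSMul, unitsSMul_apply, Units.smul_def, Units.smul_def, Units.coe_map]
  exact Int.cast_smul_eq_zsmul R _ _

theorem smul_unitsIntSMul_apply {G : Type*} [Group G] [DistribMulAction G M]
    {σ : G → ι → ι} {ε : G → ι → ℤˣ} (hb : ∀ g i, g • b i = ε g i • b (σ g i))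
    {δ : ι → ℤˣ} (hδ : ∀ g i, δ (σ g i) = δ i * ε g i) (g : G) (i : ι) :
    g • b.unitsIntSMul δ i = b.unitsIntSMul δ (σ g i) := by
  rw [unitsIntSMul_apply, unitsIntSMul_apply, smul_comm, hb, smul_smul, hδ]

end Module.Basis

theorem stmt_0_general (p : ℕ) (hp : p.Prime) (hodd : p ≠ 2)
    (G : Type) [Group G] [Fintype G] (n : ℕ) (hG : Fintype.card G = p ^ n)
    (R : Type) [CommRing R]
    (M : Type) [AddCommGroup M] [Module R M]
    [DistribMulAction G M]
    (ι : Type) (b : Module.Basis ι R M)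
    (hsign : ∀ (g : G) (i : ι), (∃ j, g • (b i) = b j) ∨ (∃ j, g • (b i) = - b j)) :
    ∃ (κ : Type) (c : Module.Basis κ R M), ∀ (g : G) (i : κ), ∃ j, g • (c i) = c j := by
  by_cases h2 : (2 : R) = 0
  · refine ⟨ι, b, fun g i => ?_⟩
    rcases hsign g i with hj | ⟨j, hj⟩
    · exact hj
    · exact ⟨j, hj.trans (neg_eq_self_of_two_eq_zero h2 _)⟩
  have hsigned : ∀ g i, ∃ (j : ι) (s : ℤˣ), g • b i = s • b j := fun g i => by
    rcases hsign g i with ⟨j, hj⟩ | ⟨j, hj⟩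
    · exact ⟨j, 1, by rw [hj, one_smul]⟩
    · exact ⟨j, -1, by rw [hj, Units.neg_smul, one_smul]⟩
  choose σ ε hb using hsigned
  have hoddG : Odd (Fintype.card G) := hG ▸ (hp.odd_of_ne_two hodd).pow
  have hδ :=
    prod_cocycle_apply_of_odd_card hoddG Int.units_sq (b.units_int_cocycle_of_smul_eq h2 hb)
  exact ⟨ι, b.unitsIntSMul fun i => ∏ g, ε g i,
    fun g i => ⟨σ g i, b.smul_unitsIntSMul_apply hb hδ g i⟩⟩

/-- Over a commutative ring `R`, a module over a finite `p`-group `G` (`p` an odd prime)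
admitting a sign-permutation basis (i.e. an `R`-basis `A` with `G • A ⊆ A ∪ (-A)`)
is a permutation module, i.e. admits an `R`-basis permuted by `G`. -/
theorem stmt_0 (p : ℕ) (hp : p.Prime) (hodd : p ≠ 2)
    (G : Type) [Group G] [Fintype G] (n : ℕ) (hG : Fintype.card G = p ^ n)
    (R : Type) [CommRing R]
    (M : Type) [AddCommGroup M] [Module R M]
    [DistribMulAction G M] [SMulCommClass G R M]
    (ι : Type) (b : Module.Basis ι R M)
    (hsign : ∀ (g : G) (i : ι), (∃ j, g • (b i) = b j) ∨ (∃ j, g • (b i) = - b j)) :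
    ∃ (κ : Type) (c : Module.Basis κ R M), ∀ (g : G) (i : κ), ∃ j, g • (c i) = c j :=
  stmt_0_general p hp hodd G n hG R M ι b hsign
end

section
/- Let G be a finite 2-group, H ⊴ G a subgroup of index 2, L the one-dimensional representation on which G acts through the sign of G/H, and M an RG-module with an R-basis A such that H·A ⊆ A and G·A ⊆ A ∪ (−A). Then M decomposes as RG-modules as M = M⁺ ⊕ (L ⊗ M⁻) where M⁺ and M⁻ are permutation RG-modules. -/
/-!
Call a basis index `i` positive if every `g ∈ G` sends `b i` to a basis vector. Positivity is
preserved along the `G`-action on positive indices and along the `H`-action on the rest, so the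
positive and the remaining basis vectors span `G`-stable complements. If some `g ∉ H` sent a
nonpositive `b i` to a basis vector, then so would every element of the coset `gH = G \ H`, and
`b i` would be positive; hence `G \ H` sends it to `-b j`. Here `j` is again nonpositive, since
otherwise `b k = -b i` for some `k`, which forces `2 = 0` and makes the signs irrelevant.
-/

open Submodule Pointwise

section SpanStable

variable {R M ι α : Type*} [Monoid α]

theorem smul_mem_span_of_forall_smul_mem [Semiring R] [AddCommMonoid M] [Module R M]
    [DistribMulAction α M] [SMulCommClass α R M] {a : α} {S : Set M}
    (hS : ∀ x ∈ S, a • x ∈ span R S) {x : M} (hx : x ∈ span R S) :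
    a • x ∈ span R S := by
  have hax : a • x ∈ span R (a • S) := by
    rw [span_smul]
    exact Submodule.smul_mem_pointwise_smul x a _ hx
  refine span_le.mpr ?_ hax
  rintro _ ⟨y, hy, rfl⟩
  exact hS y hy

theorem smul_mem_span_image [Ring R] [AddCommGroup M] [Module R M]
    [DistribMulAction α M] [SMulCommClass α R M] {v : ι → M} {a : α} {t : Set ι}
    (ht : ∀ i ∈ t, ∃ j ∈ t, a • v i = v j ∨ a • v i = -v j) {x : M}
    (hx : x ∈ span R (v '' t)) : a • x ∈ span R (v '' t) := by
  refine smul_mem_span_of_forall_smul_mem ?_ hx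
  rintro _ ⟨i, hi, rfl⟩
  obtain ⟨j, hj, hij | hij⟩ := ht i hi <;> rw [hij]
  · exact subset_span ⟨j, hj, rfl⟩
  · exact neg_mem (subset_span ⟨j, hj, rfl⟩)

end SpanStable

namespace Module.Basis

variable {R M ι : Type*}

section Semiring

variable [Semiring R] [AddCommMonoid M] [Module R M]

noncomputable def restrictSpan (b : Basis ι R M) (t : Set ι) : Basis t R (span R (b '' t)) :=
  (Basis.span (b.linearIndependent.comp _ Subtype.val_injective)).map
    (LinearEquiv.ofEq _ _ (by rw [Set.image_eq_range]; rfl))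

@[simp]
theorem coe_restrictSpan_apply (b : Basis ι R M) (t : Set ι) (i : t) :
    (b.restrictSpan t i : M) = b i := by
  simp [restrictSpan]

end Semiring

theorem neg_eq_self_of_eq_neg [CommRing R] [AddCommGroup M] [Module R M] (b : Basis ι R M)
    {j k : ι} (hjk : b j = -b k) (x : M) : -x = x := by
  classical
  have h2 : (2 : R) = 0 := by
    have hcoord := congrArg (fun y => b.repr y k) hjk
    simp only [map_neg, repr_self, Finsupp.coe_neg, Pi.neg_apply, Finsupp.single_eq_same,
      Finsupp.single_apply] at hcoord
    split_ifs at hcoord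
    · linear_combination hcoord
    · linear_combination 2 * hcoord
  rw [neg_eq_iff_add_eq_zero, ← two_smul R, h2, zero_smul]

end Module.Basis

section PermutedIndices

variable {M ι : Type*} [AddCommGroup M] (G : Type*) [Group G] [DistribMulAction G M]

def permutedIndices (v : ι → M) : Set ι :=
  {i | ∀ g : G, ∃ j, g • v i = v j}

variable {G} {v : ι → M}

theorem mem_permutedIndices_iff_of_smul_eq {g : G} {i j : ι} (hij : g • v i = v j) :
    i ∈ permutedIndices G v ↔ j ∈ permutedIndices G v := by
  constructor
  · intro hi g'
    obtain ⟨k, hk⟩ := hi (g' * g)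
    exact ⟨k, by rw [← hij, smul_smul, hk]⟩
  · intro hj g'
    obtain ⟨k, hk⟩ := hj (g' * g⁻¹)
    exact ⟨k, by rw [← hij, smul_smul, inv_mul_cancel_right] at hk; exact hk⟩

theorem mem_permutedIndices_of_neg_eq_self (hneg : ∀ x : M, -x = x)
    (hsign : ∀ (g : G) (i : ι), (∃ j, g • v i = v j) ∨ (∃ j, g • v i = -v j))
    (i : ι) : i ∈ permutedIndices G v := fun g =>
  (hsign g i).elim id fun ⟨j, hj⟩ => ⟨j, by rw [hj, hneg]⟩

variable {H : Subgroup G}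

theorem mem_permutedIndices_of_smul_eq_of_notMem (hH : H.index = 2)
    (hHperm : ∀ h ∈ H, ∀ i : ι, ∃ j, h • v i = v j) {g : G} (hg : g ∉ H) {i j : ι}
    (hij : g • v i = v j) : i ∈ permutedIndices G v := by
  intro g'
  by_cases hg' : g' ∈ H
  · exact hHperm g' hg' i
  · have hmem : g' * g⁻¹ ∈ H := by
      rw [Subgroup.mul_mem_iff_of_index_two hH, inv_mem_iff]
      exact iff_of_false hg' hg
    obtain ⟨k, hk⟩ := hHperm _ hmem j
    exact ⟨k, by rw [← hk, ← hij, smul_smul, inv_mul_cancel_right]⟩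

theorem exists_smul_eq_neg_of_notMem_permutedIndices {R : Type*} [CommRing R] [Module R M]
    (b : Module.Basis ι R M) (hH : H.index = 2)
    (hHperm : ∀ h ∈ H, ∀ i : ι, ∃ j, h • b i = b j)
    (hsign : ∀ (g : G) (i : ι), (∃ j, g • b i = b j) ∨ (∃ j, g • b i = -b j))
    {g : G} (hg : g ∉ H) {i : ι} (hi : i ∉ permutedIndices G b) :
    ∃ j ∉ permutedIndices G b, g • b i = -b j := by
  obtain ⟨j, hij⟩ | ⟨j, hij⟩ := hsign g i
  · exact absurd (mem_permutedIndices_of_smul_eq_of_notMem hH hHperm hg hij) hi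
  refine ⟨j, fun hj => hi ?_, hij⟩
  obtain ⟨k, hk⟩ := hj g⁻¹
  have hki : b k = -b i := by
    rw [← hk, ← neg_neg (b j), ← hij, smul_neg, inv_smul_smul]
  exact mem_permutedIndices_of_neg_eq_self (b.neg_eq_self_of_eq_neg hki) hsign i

end PermutedIndices

theorem stmt_2_general (R : Type) [CommRing R]
    (G : Type) [Group G]
    (H : Subgroup G) (hH : H.index = 2)
    (M : Type) [AddCommGroup M] [Module R M]
    [DistribMulAction G M] [SMulCommClass G R M]
    (ι : Type) (b : Module.Basis ι R M)
    (hHperm : ∀ h ∈ H, ∀ i : ι, ∃ j, h • (b i) = b j)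
    (hsign : ∀ (g : G) (i : ι), (∃ j, g • (b i) = b j) ∨ (∃ j, g • (b i) = - b j)) :
    ∃ (Mp N : Submodule R M),
      (∀ (g : G), ∀ x ∈ Mp, g • x ∈ Mp) ∧
      (∀ (g : G), ∀ x ∈ N, g • x ∈ N) ∧
      IsCompl Mp N ∧
      (∃ (κ : Type) (c : Module.Basis κ R Mp),
        ∀ (g : G) (i : κ), ∃ j, g • ((c i : M)) = (c j : M)) ∧
      (∃ (κ : Type) (c : Module.Basis κ R N),
        (∀ h ∈ H, ∀ i : κ, ∃ j, h • ((c i : M)) = (c j : M)) ∧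
        (∀ g ∉ H, ∀ i : κ, ∃ j, g • ((c i : M)) = - (c j : M))) := by
  set P := permutedIndices G b
  have hP (g : G) (i : ι) (hi : i ∈ P) : ∃ j ∈ P, g • b i = b j :=
    let ⟨j, hij⟩ := hi g
    ⟨j, (mem_permutedIndices_iff_of_smul_eq hij).1 hi, hij⟩
  have hHP (h : G) (hh : h ∈ H) (i : ι) (hi : i ∉ P) : ∃ j ∉ P, h • b i = b j :=
    let ⟨j, hij⟩ := hHperm h hh i
    ⟨j, (mem_permutedIndices_iff_of_smul_eq hij).not.1 hi, hij⟩
  have hGP (g : G) (hg : g ∉ H) (i : ι) (hi : i ∉ P) : ∃ j ∉ P, g • b i = -b j :=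
    exists_smul_eq_neg_of_notMem_permutedIndices b hH hHperm hsign hg hi
  refine ⟨span R (b '' P), span R (b '' Pᶜ), fun g _ => smul_mem_span_image ?_,
    fun g _ => smul_mem_span_image ?_,
    b.linearIndependent.isCompl_span_image b.span_eq isCompl_compl,
    ⟨P, b.restrictSpan P, ?_⟩, ⟨↥Pᶜ, b.restrictSpan Pᶜ, ?_, ?_⟩⟩
  · exact fun i hi => (hP g i hi).imp fun j ⟨hj, hij⟩ => ⟨hj, .inl hij⟩
  · intro i hi
    by_cases hg : g ∈ H
    · exact (hHP g hg i hi).imp fun j ⟨hj, hij⟩ => ⟨hj, .inl hij⟩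
    · exact (hGP g hg i hi).imp fun j ⟨hj, hij⟩ => ⟨hj, .inr hij⟩
  · rintro g ⟨i, hi⟩
    obtain ⟨j, hj, hij⟩ := hP g i hi
    exact ⟨⟨j, hj⟩, by simpa using hij⟩
  · rintro h hh ⟨i, hi⟩
    obtain ⟨j, hj, hij⟩ := hHP h hh i hi
    exact ⟨⟨j, hj⟩, by simpa using hij⟩
  · rintro g hg ⟨i, hi⟩
    obtain ⟨j, hj, hij⟩ := hGP g hg i hi
    exact ⟨⟨j, hj⟩, by simpa using hij⟩

/-- Let `G` be a finite 2-group, `H ⊴ G` of index 2, `L` the sign representation of `G/H`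
inflated to `G`, and `M` an `RG`-module with an `R`-basis `A` such that `H • A ⊆ A` and
`G • A ⊆ A ∪ (-A)`. Then `M = M⁺ ⊕ (L ⊗ M⁻)` with `M⁺`, `M⁻` permutation modules; the
second summand is realized as a `G`-submodule with a basis which is permuted by `H` and
sent to minus a basis vector by every element of `G \ H`. -/
theorem stmt_2 (R : Type) [CommRing R]
    (G : Type) [Group G] [Fintype G] (n : ℕ) (hG : Fintype.card G = 2 ^ n)
    (H : Subgroup G) [H.Normal] (hH : H.index = 2)
    (M : Type) [AddCommGroup M] [Module R M]
    [DistribMulAction G M] [SMulCommClass G R M]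
    (ι : Type) (b : Module.Basis ι R M)
    (hHperm : ∀ h ∈ H, ∀ i : ι, ∃ j, h • (b i) = b j)
    (hsign : ∀ (g : G) (i : ι), (∃ j, g • (b i) = b j) ∨ (∃ j, g • (b i) = - b j)) :
    ∃ (Mp N : Submodule R M),
      (∀ (g : G), ∀ x ∈ Mp, g • x ∈ Mp) ∧
      (∀ (g : G), ∀ x ∈ N, g • x ∈ N) ∧
      IsCompl Mp N ∧
      (∃ (κ : Type) (c : Module.Basis κ R Mp),
        ∀ (g : G) (i : κ), ∃ j, g • ((c i : M)) = (c j : M)) ∧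
      (∃ (κ : Type) (c : Module.Basis κ R N),
        (∀ h ∈ H, ∀ i : κ, ∃ j, h • ((c i : M)) = (c j : M)) ∧
        (∀ g ∉ H, ∀ i : κ, ∃ j, g • ((c i : M)) = - (c j : M))) :=
  stmt_2_general R G H hH M ι b hHperm hsign
end

section
/- Let R be a commutative ring, r ∈ R, R' = R[1/r], and G a finite group. Every bounded complex of finitely generated permutation R'G-modules is isomorphic in the category of complexes to the base change R' ⊗_R P of a bounded complex P of finitely generated permutation RG-modules. -/
/-! Clear denominators. The matrix entries of the finitely many nonzero differentials `d'ᵢ` all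
become integral after multiplication by one power `uˢ` of `u = r / 1`. Lifting every entry
through one fixed choice function `R' → R` yields `R`-matrices `Lᵢ` that are still equivariant,
since equivariance of `d'ᵢ` only says that its entries are constant along `G`-orbits. Over `R'`
the composite `Lᵢ₋₁ ∘ Lᵢ` vanishes, so a further power `rᵗ` kills it, and `dᵢ = rᵗ • Lᵢ` is a
complex with base change `u^(s+t) • d'ᵢ`. Scaling degree `i` by `u^((s+t) i)` identifies that
complex with `d'`. -/

open Filter Finsupp

theorem Int.eventually_cofinite_isEmpty {A : ℤ → Type*}
    (hA : ∃ N : ℕ, ∀ i : ℤ, (N : ℤ) < |i| → IsEmpty (A i)) : ∀ᶠ i in cofinite, IsEmpty (A i) := by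
  obtain ⟨N, hN⟩ := hA
  refine eventually_cofinite.2 ((Set.finite_Icc (-(N : ℤ)) N).subset fun i hi => ?_)
  by_contra h
  rw [Set.mem_Icc, ← abs_le] at h
  exact hi (hN i (not_le.1 h))

theorem Filter.eventually_forall_of_eventually_cofinite {ι β : Type*} {l : Filter β}
    {p : ι → β → Prop} (hcof : ∀ᶠ i in cofinite, ∀ b, p i b) (h : ∀ i, ∀ᶠ b in l, p i b) :
    ∀ᶠ b in l, ∀ i, p i b := by
  filter_upwards [(eventually_all_finite (eventually_cofinite.1 hcof)).2 fun i _ => h i]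
    with b hb i
  by_cases hi : ∀ b, p i b
  exacts [hi b, hb i hi]

namespace IsLocalization.Away

section liftPowMul

variable {R R' : Type*} [CommRing R] [CommRing R'] [Algebra R R'] (r : R)

noncomputable def liftPowMul (n : ℕ) (z : R') : R :=
  open Classical in
  if h : IsInteger R (algebraMap R R' r ^ n * z) then h.choose else 0

theorem algebraMap_liftPowMul {n : ℕ} {z : R'} (h : IsInteger R (algebraMap R R' r ^ n * z)) :
    algebraMap R R' (liftPowMul r n z) = algebraMap R R' r ^ n * z := by
  rw [liftPowMul, dif_pos h]
  exact h.choose_spec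

variable {α β α' β' : Type*} [Finite β] [Finite β']

noncomputable def liftPowSMul (n : ℕ) (f : (α →₀ R') →ₗ[R'] (β →₀ R')) :
    (α →₀ R) →ₗ[R] (β →₀ R) :=
  linearCombination R fun a => equivFunOnFinite.symm fun b => liftPowMul r n (f (single a 1) b)

theorem liftPowSMul_single (n : ℕ) (f : (α →₀ R') →ₗ[R'] (β →₀ R')) (a : α) (c : R) (b : β) :
    liftPowSMul r n f (single a c) b = c * liftPowMul r n (f (single a 1) b) := by
  simp [liftPowSMul]

theorem mapRange_liftPowSMul {n : ℕ} {f : (α →₀ R') →ₗ[R'] (β →₀ R')}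
    (hf : ∀ a b, IsInteger R (algebraMap R R' r ^ n * f (single a 1) b)) (x : α →₀ R) :
    mapRange (algebraMap R R') (map_zero _) (liftPowSMul r n f x)
      = algebraMap R R' r ^ n • f (mapRange (algebraMap R R') (map_zero _) x) := by
  induction x using Finsupp.induction_linear with
  | zero => simp
  | add x y hx hy => simp [mapRange_add, hx, hy]
  | single a c =>
    ext b
    rw [mapRange_single, ← mul_one (algebraMap R R' c), ← smul_eq_mul, ← smul_single, map_smul]
    simp only [mapRange_apply, liftPowSMul_single, Finsupp.smul_apply, smul_eq_mul, map_mul,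
      algebraMap_liftPowMul r (hf a b)]
    ring

theorem liftPowSMul_mapDomain {n : ℕ} {f : (α →₀ R') →ₗ[R'] (β →₀ R')}
    {f' : (α' →₀ R') →ₗ[R'] (β' →₀ R')} (σ : α ≃ α') (τ : β ≃ β')
    (hf : ∀ x, f' (mapDomain σ x) = mapDomain τ (f x)) (x : α →₀ R) :
    liftPowSMul r n f' (mapDomain σ x) = mapDomain τ (liftPowSMul r n f x) := by
  induction x using Finsupp.induction_linear with
  | zero => simp
  | add x y hx hy => simp [mapDomain_add, hx, hy]
  | single a c =>
    ext b
    have hfa := hf (single a 1)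
    rw [mapDomain_single] at hfa
    simp only [mapDomain_single, ← equivMapDomain_eq_mapDomain, equivMapDomain_apply,
      liftPowSMul_single, hfa]

theorem mapRange_liftPowSMul_comp_liftPowSMul_eq_zero {γ : Type*} [Finite γ] {n : ℕ}
    {f : (α →₀ R') →ₗ[R'] (β →₀ R')} {f' : (β →₀ R') →ₗ[R'] (γ →₀ R')}
    (hf : ∀ a b, IsInteger R (algebraMap R R' r ^ n * f (single a 1) b))
    (hf' : ∀ b c, IsInteger R (algebraMap R R' r ^ n * f' (single b 1) c))
    (hf'f : f'.comp f = 0) (x : α →₀ R) :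
    mapRange (algebraMap R R') (map_zero _) (liftPowSMul r n f' (liftPowSMul r n f x)) = 0 := by
  rw [mapRange_liftPowSMul r hf', mapRange_liftPowSMul r hf, map_smul, ← LinearMap.comp_apply,
    hf'f, LinearMap.zero_apply, smul_zero, smul_zero]

end liftPowMul

variable {R R' : Type*} [CommRing R] [CommRing R'] [Algebra R R'] (r : R)
  [IsLocalization.Away r R']

theorem eventually_isInteger_pow_mul (z : R') :
    ∀ᶠ n in atTop, IsInteger R (algebraMap R R' r ^ n * z) := by
  obtain ⟨n, a, h⟩ := surj r z
  refine eventually_atTop.2 ⟨n, fun m hm => ?_⟩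
  obtain ⟨k, rfl⟩ := Nat.exists_eq_add_of_le hm
  have : algebraMap R R' r ^ (n + k) * z = r ^ k • (z * algebraMap R R' r ^ n) := by
    rw [Algebra.smul_def, map_pow]; ring
  exact this ▸ isInteger_smul ⟨a, h.symm⟩

theorem eventually_pow_smul_eq_zero {γ : Type*} {v : γ →₀ R}
    (hv : mapRange (algebraMap R R') (map_zero _) v = 0) : ∀ᶠ n in atTop, r ^ n • v = 0 := by
  have hc : ∀ c ∈ v.support, ∀ᶠ n in atTop, r ^ n * v c = 0 := fun c _ => by
    obtain ⟨n, hn⟩ := exists_of_eq (S := R') r (a := v c) (b := 0) <| by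
      simpa using DFunLike.congr_fun hv c
    refine eventually_atTop.2 ⟨n, fun m hm => ?_⟩
    obtain ⟨k, rfl⟩ := Nat.exists_eq_add_of_le hm
    rw [pow_add, mul_comm (r ^ n), mul_assoc, hn, mul_zero, mul_zero]
  filter_upwards [(eventually_all_finset _).2 hc] with n hn
  ext c
  by_cases hcv : c ∈ v.support
  · exact hn c hcv
  · simp [notMem_support_iff.1 hcv]

theorem eventually_pow_smul_linearMap_eq_zero {α γ : Type*} [Finite α]
    {g : (α →₀ R) →ₗ[R] (γ →₀ R)} (hg : ∀ x, mapRange (algebraMap R R') (map_zero _) (g x) = 0) :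
    ∀ᶠ n in atTop, r ^ n • g = 0 := by
  filter_upwards [eventually_all.2 fun a => eventually_pow_smul_eq_zero r (hg (single a 1))]
    with n hn
  ext a
  simp [hn a]

end IsLocalization.Away

theorem units_zpow_sub_one_smul_smul {S : Type*} [CommRing S] {M : ℤ → Type*}
    [∀ i, AddCommGroup (M i)] [∀ i, Module S (M i)] (d : ∀ i, M i →ₗ[S] M (i - 1)) (w : Sˣ)
    (i : ℤ) (x : M i) : w ^ (i - 1) • (w : S) • d i x = d i (w ^ i • x) := by
  rw [Units.smul_def, Units.smul_def, map_smul, smul_smul, ← Units.val_mul, ← zpow_add_one,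
    sub_add_cancel]

open IsLocalization.Away

theorem stmt_9_general (R : Type) [CommRing R] (r : R)
    (R' : Type) [CommRing R'] [Algebra R R'] (hloc : IsLocalization.Away r R')
    (G : Type) [Group G]
    (A : ℤ → Type) (finA : ∀ i, Fintype (A i)) (φ : ∀ i, G →* Equiv.Perm (A i))
    (hbdd : ∃ N : ℕ, ∀ i : ℤ, (N : ℤ) < |i| → IsEmpty (A i))
    (d' : ∀ i : ℤ, ((A i →₀ R') →ₗ[R'] (A (i - 1) →₀ R')))
    (hd'equiv : ∀ (i : ℤ) (g : G) (f : A i →₀ R'),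
      d' i (Finsupp.mapDomain (φ i g) f) = Finsupp.mapDomain (φ (i - 1) g) (d' i f))
    (hd'd' : ∀ i : ℤ, (d' (i - 1)).comp (d' i) = 0) :
    ∃ (B : ℤ → Type) (_ : ∀ i, Fintype (B i)) (ψ : ∀ i, G →* Equiv.Perm (B i))
      (d : ∀ i : ℤ, ((B i →₀ R) →ₗ[R] (B (i - 1) →₀ R))),
      -- (B, d) is a bounded complex of permutation RG-modules
      (∃ N : ℕ, ∀ i : ℤ, (N : ℤ) < |i| → IsEmpty (B i)) ∧
      (∀ (i : ℤ) (g : G) (f : B i →₀ R),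
        d i (Finsupp.mapDomain (ψ i g) f) = Finsupp.mapDomain (ψ (i - 1) g) (d i f)) ∧
      (∀ i : ℤ, (d (i - 1)).comp (d i) = 0) ∧
      -- its base change to R' is isomorphic, as a complex of R'G-modules, to (A, d')
      ∃ (dR' : ∀ i : ℤ, ((B i →₀ R') →ₗ[R'] (B (i - 1) →₀ R')))
        (e : ∀ i : ℤ, ((B i →₀ R') ≃ₗ[R'] (A i →₀ R'))),
        -- dR' is the base change of d
        (∀ (i : ℤ) (f : B i →₀ R),
          dR' i (Finsupp.mapRange (algebraMap R R') (map_zero _) f)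
            = Finsupp.mapRange (algebraMap R R') (map_zero _) (d i f)) ∧
        -- e is G-equivariant
        (∀ (i : ℤ) (g : G) (f : B i →₀ R'),
          e i (Finsupp.mapDomain (ψ i g) f) = Finsupp.mapDomain (φ i g) (e i f)) ∧
        -- e is a map of complexes
        (∀ (i : ℤ) (f : B i →₀ R'), e (i - 1) (dR' i f) = d' i (e i f)) := by
  have hempty := Int.eventually_cofinite_isEmpty hbdd
  obtain ⟨s, hs⟩ := (eventually_forall_of_eventually_cofinite
    (hempty.mono fun i _ n a => isEmptyElim a)
    fun i => eventually_all.2 fun a => eventually_all.2 fun b =>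
      eventually_isInteger_pow_mul r (d' i (single a 1) b)).exists
  let L i := liftPowSMul r s (d' i)
  obtain ⟨t, ht⟩ := (eventually_forall_of_eventually_cofinite
    (hempty.mono fun i _ n => Subsingleton.elim _ _)
    fun i => eventually_pow_smul_linearMap_eq_zero r (g := (L (i - 1)).comp (L i))
      (mapRange_liftPowSMul_comp_liftPowSMul_eq_zero r (hs i) (hs (i - 1)) (hd'd' i))).exists
  let w := (algebraMap_isUnit (S := R') r).unit ^ (s + t)
  have hw : (w : R') = algebraMap R R' r ^ (s + t) := by simp [w]
  refine ⟨A, finA, φ, fun i => r ^ t • L i, hbdd, fun i g f => ?_, fun i => ?_,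
    fun i => (w : R') • d' i, fun i => LinearEquiv.smulOfUnit (w ^ i), fun i f => ?_,
    fun i g f => (mapDomain_smul _ _).symm, units_zpow_sub_one_smul_smul d' w⟩
  · simp [L, liftPowSMul_mapDomain r _ _ (hd'equiv i g), mapDomain_smul]
  · rw [LinearMap.smul_comp, LinearMap.comp_smul, ht i, smul_zero]
  · ext b
    have hb := DFunLike.congr_fun (mapRange_liftPowSMul r (hs i) f) b
    simp only [mapRange_apply, Finsupp.smul_apply, smul_eq_mul] at hb
    simp only [LinearMap.smul_apply, Finsupp.smul_apply, mapRange_apply, smul_eq_mul, map_mul,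
      map_pow, hb, hw, L]
    ring

/-- Let `R` be a commutative ring, `r ∈ R`, `R' = R[1/r]` and `G` a finite group. Every
bounded complex of finitely generated permutation `R'G`-modules (encoded by finite
`G`-sets `A i` and equivariant differentials `d'` with `d' ∘ d' = 0`) is isomorphic, in
the category of complexes, to the base change `R' ⊗_R P` of a bounded complex `P` of
finitely generated permutation `RG`-modules. -/
theorem stmt_9 (R : Type) [CommRing R] (r : R)
    (R' : Type) [CommRing R'] [Algebra R R'] (hloc : IsLocalization.Away r R')
    (G : Type) [Group G] [Fintype G]
    (A : ℤ → Type) (finA : ∀ i, Fintype (A i)) (φ : ∀ i, G →* Equiv.Perm (A i))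
    (hbdd : ∃ N : ℕ, ∀ i : ℤ, (N : ℤ) < |i| → IsEmpty (A i))
    (d' : ∀ i : ℤ, ((A i →₀ R') →ₗ[R'] (A (i - 1) →₀ R')))
    (hd'equiv : ∀ (i : ℤ) (g : G) (f : A i →₀ R'),
      d' i (Finsupp.mapDomain (φ i g) f) = Finsupp.mapDomain (φ (i - 1) g) (d' i f))
    (hd'd' : ∀ i : ℤ, (d' (i - 1)).comp (d' i) = 0) :
    ∃ (B : ℤ → Type) (_ : ∀ i, Fintype (B i)) (ψ : ∀ i, G →* Equiv.Perm (B i))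
      (d : ∀ i : ℤ, ((B i →₀ R) →ₗ[R] (B (i - 1) →₀ R))),
      -- (B, d) is a bounded complex of permutation RG-modules
      (∃ N : ℕ, ∀ i : ℤ, (N : ℤ) < |i| → IsEmpty (B i)) ∧
      (∀ (i : ℤ) (g : G) (f : B i →₀ R),
        d i (Finsupp.mapDomain (ψ i g) f) = Finsupp.mapDomain (ψ (i - 1) g) (d i f)) ∧
      (∀ i : ℤ, (d (i - 1)).comp (d i) = 0) ∧
      -- its base change to R' is isomorphic, as a complex of R'G-modules, to (A, d')
      ∃ (dR' : ∀ i : ℤ, ((B i →₀ R') →ₗ[R'] (B (i - 1) →₀ R')))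
        (e : ∀ i : ℤ, ((B i →₀ R') ≃ₗ[R'] (A i →₀ R'))),
        -- dR' is the base change of d
        (∀ (i : ℤ) (f : B i →₀ R),
          dR' i (Finsupp.mapRange (algebraMap R R') (map_zero _) f)
            = Finsupp.mapRange (algebraMap R R') (map_zero _) (d i f)) ∧
        -- e is G-equivariant
        (∀ (i : ℤ) (g : G) (f : B i →₀ R'),
          e i (Finsupp.mapDomain (ψ i g) f) = Finsupp.mapDomain (φ i g) (e i f)) ∧
        -- e is a map of complexes
        (∀ (i : ℤ) (f : B i →₀ R'), e (i - 1) (dR' i f) = d' i (e i f)) :=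
  stmt_9_general R r R' hloc G A finA φ hbdd d' hd'equiv hd'd'
end

section
/- Let G be a finite p-group (p odd) and R a commutative ring. The trivial RG-module R admits a finite resolution 0 → Pₙ → ⋯ → P₁ → P₀ → R → 0 by finitely generated permutation RG-modules with P₀ free, obtained from the Koszul complex of the augmentation RG → R. -/
/-!
Order `G` arbitrarily. The exterior powers `Λᵏ(R[G])`, with basis `e_S` indexed by the
`k`-subsets `S ⊆ G`, form the Koszul complex of the augmentation `e_g ↦ 1`; wedging with `e_1`
is a contracting homotopy, so the complex is exact. The group acts by `g • e_S = χ(g, S) e_{gS}`,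
where `χ(g, S) = ±1` is the sign of the permutation `g` induces on `S`. Since `χ` is a
`{±1}`-valued cocycle and `|G|` is odd, it is the coboundary of `σ(S) = ∏_g χ(g, S)`.
Rescaling `e_S` by `σ(S)` therefore turns every `Λᵏ(R[G])` into the permutation module on the
`k`-subsets of `G`, and `Λ¹(R[G]) = R[G]` is free.
-/

open Finset
open scoped Pointwise

section Signs

variable {α : Type*} [LinearOrder α]

def ltSign (x y : α) : ℤˣ := if x < y then -1 else 1

def posSign (S : Finset α) (y : α) : ℤˣ := ∏ x ∈ S, ltSign x y

@[simp] lemma ltSign_self (x : α) : ltSign x x = 1 := by simp [ltSign]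

lemma ltSign_swap {x y : α} (h : x ≠ y) : ltSign y x = -ltSign x y := by
  rcases h.lt_or_gt with h | h <;> simp [ltSign, h, h.not_gt]

lemma posSign_insert {S : Finset α} {x : α} (hx : x ∉ S) (y : α) :
    posSign (insert x S) y = ltSign x y * posSign S y :=
  prod_insert hx

lemma posSign_erase {S : Finset α} {x : α} (hx : x ∈ S) (y : α) :
    posSign (S.erase x) y = ltSign x y * posSign S y := by
  unfold posSign
  rw [← mul_prod_erase S (fun z => ltSign z y) hx, ← mul_assoc, Int.units_mul_self, one_mul]

@[simp] lemma posSign_erase_self (S : Finset α) (x : α) :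
    posSign (S.erase x) x = posSign S x :=
  prod_erase S (ltSign_self x)

@[simp] lemma posSign_insert_self (S : Finset α) (x : α) :
    posSign (insert x S) x = posSign S x :=
  prod_insert_of_eq_one_if_notMem fun _ => ltSign_self x

lemma posSign_mul_posSign_erase_swap {S : Finset α} {x y : α} (hx : x ∈ S) (hy : y ∈ S)
    (hxy : x ≠ y) :
    posSign S x * posSign (S.erase x) y = -(posSign S y * posSign (S.erase y) x) := by
  rw [posSign_erase hx, posSign_erase hy, ltSign_swap hxy, neg_mul, mul_neg, neg_neg]
  ac_rfl

lemma posSign_mul_posSign_insert {S : Finset α} {x u : α} (hx : x ∈ S) (hu : u ∉ S) :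
    posSign S u * posSign (insert u S) x = -(posSign S x * posSign (S.erase x) u) := by
  have hxu : x ≠ u := fun h => hu (h ▸ hx)
  rw [posSign_insert hu, posSign_erase hx, ltSign_swap hxu, neg_mul, mul_neg]
  congr 1
  ac_rfl

end Signs

section Inversions

variable {α : Type*} [LinearOrder α] {G : Type*} [Group G] [MulAction G α]

def inversionPairSign (g : G) (x y : α) : ℤˣ := if x < y ∧ g • y < g • x then -1 else 1

def inversionSign (g : G) (S : Finset α) : ℤˣ := ∏ x ∈ S, ∏ y ∈ S, inversionPairSign g x y

@[simp] lemma inversionPairSign_self (g : G) (x : α) : inversionPairSign g x x = 1 := by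
  simp [inversionPairSign]

lemma inversionPairSign_mul_swap (g : G) (x y : α) :
    inversionPairSign g x y * inversionPairSign g y x = ltSign x y * ltSign (g • x) (g • y) := by
  rcases lt_trichotomy x y with h | rfl | h
  · have hg : g • x ≠ g • y := (MulAction.injective g).ne h.ne
    rcases hg.lt_or_gt with hg | hg <;>
      simp [inversionPairSign, ltSign, h, h.not_gt, hg, hg.not_gt]
  · simp
  · have hg : g • x ≠ g • y := (MulAction.injective g).ne h.ne'
    rcases hg.lt_or_gt with hg | hg <;>
      simp [inversionPairSign, ltSign, h, h.not_gt, hg, hg.not_gt]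

lemma posSign_smul (g : G) (S : Finset α) (y : α) :
    posSign (g • S) (g • y) = ∏ x ∈ S, ltSign (g • x) (g • y) :=
  prod_image fun _ _ _ _ h => MulAction.injective g h

lemma smul_finset_erase (g : G) (S : Finset α) (x : α) :
    g • S.erase x = (g • S).erase (g • x) :=
  image_erase (MulAction.injective g) S x

lemma inversionSign_insert (g : G) {S : Finset α} {x : α} (hx : x ∉ S) :
    inversionSign g (insert x S) =
      inversionSign g S * posSign S x * posSign (g • S) (g • x) := by
  have hpairs : (∏ a ∈ S, inversionPairSign g a x) * ∏ b ∈ S, inversionPairSign g x b =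
      posSign S x * posSign (g • S) (g • x) := by
    rw [← prod_mul_distrib, posSign_smul, posSign, ← prod_mul_distrib]
    exact prod_congr rfl fun b _ => inversionPairSign_mul_swap g b x
  calc inversionSign g (insert x S)
      = inversionPairSign g x x * (∏ b ∈ S, inversionPairSign g x b) *
          ((∏ a ∈ S, inversionPairSign g a x) * inversionSign g S) := by
        simp only [inversionSign, prod_insert hx, prod_mul_distrib]
    _ = inversionSign g S *
          ((∏ a ∈ S, inversionPairSign g a x) * ∏ b ∈ S, inversionPairSign g x b) := by
        rw [inversionPairSign_self, one_mul]
        ac_rfl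
    _ = _ := by rw [hpairs, mul_assoc]

lemma inversionSign_mul_posSign_smul (g : G) {S : Finset α} {x : α} (hx : x ∈ S) :
    inversionSign g S * posSign (g • S) (g • x) = posSign S x * inversionSign g (S.erase x) := by
  have h := inversionSign_insert g (notMem_erase x S)
  rw [insert_erase hx, posSign_erase_self, smul_finset_erase, posSign_erase_self] at h
  rw [h, mul_assoc, Int.units_mul_self, mul_one, mul_comm]

lemma inversionSign_mul (g h : G) (S : Finset α) :
    inversionSign (g * h) S = inversionSign g (h • S) * inversionSign h S := by
  induction S using Finset.induction_on with
  | empty => simp [inversionSign]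
  | insert x S hx ih =>
    have hhx : h • x ∉ h • S := (smul_mem_smul_finset_iff h).not.mpr hx
    rw [smul_finset_insert, inversionSign_insert _ hx, inversionSign_insert _ hhx,
      inversionSign_insert _ hx, ih, mul_smul, mul_smul,
      ← mul_one (inversionSign g (h • S) * inversionSign h S * posSign S x * _),
      ← Int.units_mul_self (posSign (h • S) (h • x))]
    simp only [mul_comm, mul_left_comm, mul_assoc]

end Inversions

theorem exists_coboundary_of_odd_card {G X : Type*} [Group G] [Fintype G] [MulAction G X]
    (hG : Odd (Fintype.card G)) (χ : G → X → ℤˣ)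
    (hχ : ∀ g h x, χ (g * h) x = χ g (h • x) * χ h x) :
    ∃ σ : X → ℤˣ, ∀ g x, σ (g • x) = χ g x * σ x := by
  refine ⟨fun x => ∏ g, χ g x, fun h x => ?_⟩
  have hshift : ∀ g, χ g (h • x) = χ (g * h) x * χ h x := fun g => by
    rw [hχ, mul_assoc, Int.units_mul_self, mul_one]
  simp only [hshift, prod_mul_distrib, prod_const, card_univ, Int.units_pow_eq_pow_mod_two,
    Nat.odd_iff.mp hG, pow_one]
  rw [Fintype.prod_equiv (Equiv.mulRight h) (fun g => χ (g * h) x) (fun g => χ g x)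
    fun _ => rfl, mul_comm]

theorem Finset.sum_sum_erase_eq_zero {ι M : Type*} [DecidableEq ι] [AddCommMonoid M]
    (s : Finset ι) (F : ι → ι → M) (hF : ∀ x ∈ s, ∀ y ∈ s, x ≠ y → F x y + F y x = 0) :
    ∑ x ∈ s, ∑ y ∈ s.erase x, F x y = 0 := by
  rw [← sum_finset_product' s.offDiag s (fun x => s.erase x) fun p => by
    rw [mem_offDiag, mem_erase]; grind]
  refine sum_involution (fun p _ => p.swap) (fun p hp => ?_) (fun p hp _ h => ?_)
    (fun p hp => ?_) (fun _ _ => rfl) <;> rw [mem_offDiag] at hp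
  · exact hF _ hp.1 _ hp.2.1 hp.2.2
  · exact hp.2.2 (congrArg Prod.fst h).symm
  · exact mem_offDiag.2 ⟨hp.2.1, hp.1, Ne.symm hp.2.2⟩

noncomputable section Koszul

variable {α : Type*} [LinearOrder α] (R : Type*) [CommRing R]

def koszulDiff : (Finset α →₀ R) →ₗ[R] (Finset α →₀ R) :=
  Finsupp.linearCombination R fun S => ∑ x ∈ S, Finsupp.single (S.erase x) (posSign S x : R)

def koszulHomotopy (u : α) : (Finset α →₀ R) →ₗ[R] (Finset α →₀ R) :=
  Finsupp.linearCombination R fun S =>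
    if u ∈ S then 0 else Finsupp.single (insert u S) (posSign S u : R)

variable {R}

lemma koszulDiff_single (S : Finset α) (r : R) :
    koszulDiff R (Finsupp.single S r) =
      ∑ x ∈ S, Finsupp.single (S.erase x) (r * posSign S x) := by
  simp [koszulDiff, Finset.smul_sum]

lemma koszulHomotopy_single_of_mem {u : α} {S : Finset α} (hu : u ∈ S) (r : R) :
    koszulHomotopy R u (Finsupp.single S r) = 0 := by
  simp [koszulHomotopy, hu]

lemma koszulHomotopy_single_of_notMem {u : α} {S : Finset α} (hu : u ∉ S) (r : R) :
    koszulHomotopy R u (Finsupp.single S r) = Finsupp.single (insert u S) (r * posSign S u) := by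
  simp [koszulHomotopy, hu]

lemma koszulDiff_koszulDiff (f : Finset α →₀ R) : koszulDiff R (koszulDiff R f) = 0 := by
  induction f using Finsupp.induction_linear with
  | zero => simp
  | add f g hf hg => simp [hf, hg]
  | single S r =>
    simp only [koszulDiff_single, map_sum]
    refine sum_sum_erase_eq_zero S _ fun x hx y hy hxy => ?_
    rw [erase_right_comm, ← Finsupp.single_add, mul_assoc, mul_assoc, ← mul_add,
      ← Int.cast_mul, ← Int.cast_mul, ← Int.cast_add, ← Units.val_mul, ← Units.val_mul,
      posSign_mul_posSign_erase_swap hy hx hxy.symm, Units.val_neg, add_neg_cancel]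
    simp

lemma koszulDiff_koszulHomotopy_add (u : α) (f : Finset α →₀ R) :
    koszulDiff R (koszulHomotopy R u f) + koszulHomotopy R u (koszulDiff R f) = f := by
  induction f using Finsupp.induction_linear with
  | zero => simp
  | add f g hf hg => rw [map_add, map_add, map_add, map_add, add_add_add_comm, hf, hg]
  | single S r =>
    by_cases hu : u ∈ S
    · rw [koszulHomotopy_single_of_mem hu, map_zero, zero_add, koszulDiff_single, map_sum,
        sum_eq_single_of_mem u hu fun x _ hxu =>
          koszulHomotopy_single_of_mem (mem_erase.2 ⟨Ne.symm hxu, hu⟩) _,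
        koszulHomotopy_single_of_notMem (notMem_erase u S), insert_erase hu, posSign_erase_self,
        mul_assoc, ← Int.cast_mul, ← Units.val_mul, Int.units_mul_self]
      simp
    · rw [koszulHomotopy_single_of_notMem hu, koszulDiff_single, sum_insert hu, erase_insert hu,
        koszulDiff_single, map_sum, add_assoc, ← sum_add_distrib, sum_eq_zero, add_zero,
        posSign_insert_self, mul_assoc, ← Int.cast_mul, ← Units.val_mul, Int.units_mul_self]
      · simp
      intro x hx
      have hxu : u ≠ x := fun h => hu (h ▸ hx)
      rw [koszulHomotopy_single_of_notMem (fun h => hu (mem_of_mem_erase h)),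
        erase_insert_of_ne hxu, ← Finsupp.single_add, mul_assoc, mul_assoc, ← mul_add,
        ← Int.cast_mul, ← Int.cast_mul, ← Int.cast_add, ← Units.val_mul, ← Units.val_mul,
        posSign_mul_posSign_insert hx hu, Units.val_neg, neg_add_cancel]
      simp

end Koszul

noncomputable section SignedPermutation

variable (R : Type*) [CommRing R] {G X : Type*} [Group G] [MulAction G X]

def signedPerm (χ : G → X → ℤˣ) (g : G) : (X →₀ R) →ₗ[R] (X →₀ R) :=
  Finsupp.linearCombination R fun x => Finsupp.single (g • x) (χ g x : R)

def signTwist (σ : X → ℤˣ) : (X →₀ R) →ₗ[R] (X →₀ R) :=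
  Finsupp.linearCombination R fun x => Finsupp.single x (σ x : R)

variable {R}

lemma signedPerm_single (χ : G → X → ℤˣ) (g : G) (x : X) (r : R) :
    signedPerm R χ g (Finsupp.single x r) = Finsupp.single (g • x) (r * χ g x) := by
  simp [signedPerm]

lemma signTwist_single (σ : X → ℤˣ) (x : X) (r : R) :
    signTwist R σ (Finsupp.single x r) = Finsupp.single x (r * σ x) := by
  simp [signTwist]

lemma signTwist_signTwist (σ : X → ℤˣ) (f : X →₀ R) :
    signTwist R σ (signTwist R σ f) = f := by
  induction f using Finsupp.induction_linear with
  | zero => simp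
  | add f g hf hg => rw [map_add, map_add, hf, hg]
  | single x r =>
    rw [signTwist_single, signTwist_single, mul_assoc, ← Int.cast_mul, ← Units.val_mul,
      Int.units_mul_self, Units.val_one, Int.cast_one, mul_one]

lemma signTwist_signedPerm {χ : G → X → ℤˣ} {σ : X → ℤˣ}
    (hσ : ∀ g x, σ (g • x) = χ g x * σ x) (g : G) (f : X →₀ R) :
    signTwist R σ (signedPerm R χ g f) = Finsupp.mapDomain (g • ·) (signTwist R σ f) := by
  induction f using Finsupp.induction_linear with
  | zero => simp
  | add f f' hf hf' => rw [map_add, map_add, hf, hf', map_add, Finsupp.mapDomain_add]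
  | single x r =>
    rw [signedPerm_single, signTwist_single, signTwist_single, Finsupp.mapDomain_single, hσ,
      mul_assoc, ← Int.cast_mul, ← Units.val_mul, ← mul_assoc, Int.units_mul_self, one_mul]

lemma koszulDiff_signedPerm {α : Type*} [LinearOrder α] [MulAction G α] (g : G)
    (f : Finset α →₀ R) :
    koszulDiff R (signedPerm R inversionSign g f) =
      signedPerm R inversionSign g (koszulDiff R f) := by
  induction f using Finsupp.induction_linear with
  | zero => simp
  | add f f' hf hf' => simp only [map_add, hf, hf']
  | single S r =>
    rw [signedPerm_single, koszulDiff_single, koszulDiff_single, map_sum, smul_finset_def,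
      sum_image fun _ _ _ _ h => MulAction.injective g h]
    refine sum_congr rfl fun x hx => ?_
    rw [signedPerm_single, ← smul_finset_def, ← smul_finset_erase, mul_assoc, mul_assoc,
      ← Int.cast_mul, ← Int.cast_mul, ← Units.val_mul, ← Units.val_mul,
      inversionSign_mul_posSign_smul g hx]

end SignedPermutation

namespace Finsupp

variable {X M : Type*} [AddCommMonoid M] {s : Set X}

lemma mapDomain_val_mem_supported (R : Type*) [Semiring R] [Module R M] (f : s →₀ M) :
    mapDomain Subtype.val f ∈ supported M R s := by
  classical
  refine (mem_supported _ _).2 fun x hx => ?_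
  obtain ⟨y, -, rfl⟩ := Finset.mem_image.1 (mapDomain_support hx)
  exact y.2

lemma subtypeDomain_mapDomain_val (f : s →₀ M) :
    subtypeDomain (· ∈ s) (mapDomain Subtype.val f) = f := by
  ext x
  rw [subtypeDomain_apply, mapDomain_apply Subtype.val_injective]

lemma mapDomain_val_subtypeDomain {R : Type*} [Semiring R] [Module R M] {f : X →₀ M}
    (hf : f ∈ supported M R s) : mapDomain Subtype.val (subtypeDomain (· ∈ s) f) = f := by
  ext x
  by_cases hx : x ∈ s
  · rw [← Subtype.coe_mk x hx, mapDomain_apply Subtype.val_injective, subtypeDomain_apply]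
  · rw [mapDomain_of_notMem_range _ _ (by simpa using hx),
      notMem_support_iff.1 fun h => hx ((mem_supported _ _).1 hf h)]

end Finsupp

theorem LinearMap.ker_eq_range_of_homotopy {R M₀ M₁ M₂ : Type*} [Semiring R]
    [AddCommMonoid M₀] [AddCommMonoid M₁] [AddCommMonoid M₂] [Module R M₀] [Module R M₁]
    [Module R M₂] {d₁ : M₁ →ₗ[R] M₀} {d₂ : M₂ →ₗ[R] M₁} {h₀ : M₀ →ₗ[R] M₁}
    {h₁ : M₁ →ₗ[R] M₂} (hd : d₁ ∘ₗ d₂ = 0) (hh : d₂ ∘ₗ h₁ + h₀ ∘ₗ d₁ = LinearMap.id) :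
    ker d₁ = range d₂ := by
  refine le_antisymm (fun x hx => ?_) ?_
  · refine ⟨h₁ x, ?_⟩
    simpa [(mem_ker).1 hx] using congr($hh x)
  · rintro _ ⟨y, rfl⟩
    exact congr($hd y)

noncomputable section CardBlocks

open Set (powersetCard)

variable {α R : Type*} [CommRing R]

/-- The block of `F` from the `k`-subsets to the `j`-subsets. -/
def cardBlock (F : (Finset α →₀ R) →ₗ[R] (Finset α →₀ R)) (j k : ℕ) :
    (powersetCard α k →₀ R) →ₗ[R] (powersetCard α j →₀ R) :=
  Finsupp.lsubtypeDomain (powersetCard α j) ∘ₗ F ∘ₗ Finsupp.lmapDomain R R Subtype.val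

def MapsCard (F : (Finset α →₀ R) →ₗ[R] (Finset α →₀ R)) (k j : ℕ) : Prop :=
  ∀ f ∈ Finsupp.supported R R (powersetCard α k), F f ∈ Finsupp.supported R R (powersetCard α j)

lemma MapsCard.of_single {F : (Finset α →₀ R) →ₗ[R] (Finset α →₀ R)} {k j : ℕ}
    (hF : ∀ S : Finset α, S.card = k →
      F (Finsupp.single S 1) ∈ Finsupp.supported R R (powersetCard α j)) :
    MapsCard F k j := by
  intro f hf
  rw [Finsupp.supported_eq_span_single] at hf
  refine (Submodule.span_le (p := (Finsupp.supported R R (powersetCard α j)).comap F)).2 ?_ hf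
  rintro _ ⟨S, hS, rfl⟩
  exact hF S hS

lemma MapsCard.comp {F F' : (Finset α →₀ R) →ₗ[R] (Finset α →₀ R)} {i j k : ℕ}
    (hF' : MapsCard F' j i) (hF : MapsCard F k j) : MapsCard (F' ∘ₗ F) k i :=
  fun f hf => hF' _ (hF f hf)

lemma cardBlock_comp {F F' : (Finset α →₀ R) →ₗ[R] (Finset α →₀ R)} {i j k : ℕ}
    (hF : MapsCard F k j) : cardBlock F' i j ∘ₗ cardBlock F j k = cardBlock (F' ∘ₗ F) i k := by
  refine LinearMap.ext fun f => ?_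
  simp only [cardBlock, LinearMap.comp_apply, Finsupp.lsubtypeDomain_apply,
    Finsupp.lmapDomain_apply]
  rw [Finsupp.mapDomain_val_subtypeDomain (hF _ (Finsupp.mapDomain_val_mem_supported R f))]

@[simp] lemma cardBlock_id (k : ℕ) :
    cardBlock (α := α) (R := R) LinearMap.id k k = LinearMap.id :=
  LinearMap.ext Finsupp.subtypeDomain_mapDomain_val

lemma cardBlock_add (F F' : (Finset α →₀ R) →ₗ[R] (Finset α →₀ R)) (j k : ℕ) :
    cardBlock (F + F') j k = cardBlock F j k + cardBlock F' j k := by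
  simp [cardBlock, LinearMap.add_comp, LinearMap.comp_add]

lemma mapsCard_signTwist (σ : Finset α → ℤˣ) (k : ℕ) : MapsCard (signTwist R σ) k k :=
  MapsCard.of_single fun S hS => by
    rw [signTwist_single]
    exact Finsupp.single_mem_supported R _ hS

lemma mapsCard_lmapDomain_smul {G : Type*} [Group G] [MulAction G α] [DecidableEq α] (g : G)
    (k : ℕ) : MapsCard (Finsupp.lmapDomain R R (g • · : Finset α → Finset α)) k k :=
  MapsCard.of_single fun S hS => by
    rw [Finsupp.lmapDomain_apply, Finsupp.mapDomain_single]
    exact Finsupp.single_mem_supported R _ ((card_smul_finset g S).trans hS)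

lemma cardBlock_lmapDomain_smul {G : Type*} [Group G] [MulAction G α] [DecidableEq α] (g : G)
    (k : ℕ) :
    cardBlock (Finsupp.lmapDomain R R (g • · : Finset α → Finset α)) k k =
      Finsupp.lmapDomain R R (g • · : powersetCard α k → powersetCard α k) := by
  refine LinearMap.ext fun f => ?_
  have hval : ((g • ·) ∘ Subtype.val : powersetCard α k → Finset α) = Subtype.val ∘ (g • ·) :=
    funext fun _ => Set.powersetCard.coe_smul.symm
  simp only [cardBlock, LinearMap.comp_apply, Finsupp.lmapDomain_apply,
    Finsupp.lsubtypeDomain_apply]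
  rw [← Finsupp.mapDomain_comp, hval, Finsupp.mapDomain_comp,
    Finsupp.subtypeDomain_mapDomain_val]

end CardBlocks

instance Set.powersetCard.instSubsingletonZero {α : Type*} :
    Subsingleton (Set.powersetCard α 0) :=
  ⟨fun s t => Subtype.ext ((card_eq_zero.1 s.2).trans (card_eq_zero.1 t.2).symm)⟩

lemma Set.powersetCard.ofSingleton_symm_smul {G α : Type*} [Group G] [MulAction G α]
    [DecidableEq α] (g : G) (s : Set.powersetCard α 1) :
    ofSingleton.symm (g • s) = g • ofSingleton.symm s := by
  rw [Equiv.symm_apply_eq]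
  exact (congrArg (g • ·) (ofSingleton.apply_symm_apply s)).symm

noncomputable section TwistedKoszul

open Set (powersetCard)

variable {α : Type*} [LinearOrder α] (R : Type*) [CommRing R]

def twistedKoszulDiff (σ : Finset α → ℤˣ) : (Finset α →₀ R) →ₗ[R] (Finset α →₀ R) :=
  signTwist R σ ∘ₗ koszulDiff R ∘ₗ signTwist R σ

def twistedKoszulHomotopy (σ : Finset α → ℤˣ) (u : α) :
    (Finset α →₀ R) →ₗ[R] (Finset α →₀ R) :=
  signTwist R σ ∘ₗ koszulHomotopy R u ∘ₗ signTwist R σ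

variable {R}

lemma mapsCard_twistedKoszulDiff (σ : Finset α → ℤˣ) (k : ℕ) :
    MapsCard (twistedKoszulDiff R σ) (k + 1) k := by
  refine (mapsCard_signTwist σ k).comp (MapsCard.comp (MapsCard.of_single fun S hS => ?_)
    (mapsCard_signTwist σ (k + 1)))
  rw [koszulDiff_single]
  refine Submodule.sum_mem _ fun x hx => Finsupp.single_mem_supported R _ ?_
  simp [Set.powersetCard.mem_iff, card_erase_of_mem hx, hS]

lemma mapsCard_twistedKoszulHomotopy (σ : Finset α → ℤˣ) (u : α) (k : ℕ) :
    MapsCard (twistedKoszulHomotopy R σ u) k (k + 1) := by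
  refine (mapsCard_signTwist σ (k + 1)).comp (MapsCard.comp (MapsCard.of_single fun S hS => ?_)
    (mapsCard_signTwist σ k))
  by_cases hu : u ∈ S
  · rw [koszulHomotopy_single_of_mem hu]
    exact zero_mem _
  · rw [koszulHomotopy_single_of_notMem hu]
    refine Finsupp.single_mem_supported R _ ?_
    simp [Set.powersetCard.mem_iff, card_insert_of_notMem hu, hS]

lemma twistedKoszulDiff_comp_self (σ : Finset α → ℤˣ) :
    twistedKoszulDiff R σ ∘ₗ twistedKoszulDiff R σ = 0 :=
  LinearMap.ext fun f => by
    simp [twistedKoszulDiff, signTwist_signTwist, koszulDiff_koszulDiff]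

lemma twistedKoszulDiff_comp_homotopy_add (σ : Finset α → ℤˣ) (u : α) :
    twistedKoszulDiff R σ ∘ₗ twistedKoszulHomotopy R σ u +
      twistedKoszulHomotopy R σ u ∘ₗ twistedKoszulDiff R σ = LinearMap.id :=
  LinearMap.ext fun f => by
    simp [twistedKoszulDiff, twistedKoszulHomotopy, signTwist_signTwist, ← map_add,
      koszulDiff_koszulHomotopy_add]

lemma twistedKoszulDiff_mapDomain_val_zero (σ : Finset α → ℤˣ) (f : powersetCard α 0 →₀ R) :
    twistedKoszulDiff R σ (Finsupp.mapDomain Subtype.val f) = 0 := by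
  induction f using Finsupp.induction_linear with
  | zero => simp
  | add f f' hf hf' => rw [Finsupp.mapDomain_add, map_add, hf, hf', add_zero]
  | single S r =>
    obtain ⟨S, hS⟩ := S
    rw [Set.powersetCard.mem_iff, card_eq_zero] at hS
    subst hS
    simp only [twistedKoszulDiff, LinearMap.comp_apply, Finsupp.mapDomain_single,
      signTwist_single, koszulDiff_single, sum_empty, map_zero]

lemma ker_cardBlock_twistedKoszulDiff [Nonempty α] (σ : Finset α → ℤˣ) (k : ℕ) :
    LinearMap.ker (cardBlock (twistedKoszulDiff R σ) k (k + 1)) =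
      LinearMap.range (cardBlock (twistedKoszulDiff R σ) (k + 1) (k + 2)) := by
  obtain ⟨u⟩ := ‹Nonempty α›
  refine LinearMap.ker_eq_range_of_homotopy
    (h₀ := cardBlock (twistedKoszulHomotopy R σ u) (k + 1) k)
    (h₁ := cardBlock (twistedKoszulHomotopy R σ u) (k + 2) (k + 1)) ?_ ?_
  · rw [cardBlock_comp (mapsCard_twistedKoszulDiff σ (k + 1)), twistedKoszulDiff_comp_self]
    exact LinearMap.ext fun f => by simp [cardBlock]
  · rw [cardBlock_comp (mapsCard_twistedKoszulHomotopy σ u (k + 1)),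
      cardBlock_comp (mapsCard_twistedKoszulDiff σ k), ← cardBlock_add,
      twistedKoszulDiff_comp_homotopy_add, cardBlock_id]

lemma surjective_cardBlock_twistedKoszulDiff_zero [Nonempty α] (σ : Finset α → ℤˣ) :
    Function.Surjective (cardBlock (twistedKoszulDiff R σ) 0 1) := by
  obtain ⟨u⟩ := ‹Nonempty α›
  have hHD : cardBlock (twistedKoszulHomotopy R σ u ∘ₗ twistedKoszulDiff R σ) 0 0 = 0 :=
    LinearMap.ext fun f => by simp [cardBlock, twistedKoszulDiff_mapDomain_val_zero]
  have h : cardBlock (twistedKoszulDiff R σ) 0 1 ∘ₗ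
      cardBlock (twistedKoszulHomotopy R σ u) 1 0 = LinearMap.id := by
    rw [cardBlock_comp (mapsCard_twistedKoszulHomotopy σ u 0), ← add_zero (cardBlock _ 0 0),
      ← hHD, ← cardBlock_add, twistedKoszulDiff_comp_homotopy_add, cardBlock_id]
  exact fun f => ⟨_, congr($h f)⟩

variable {G : Type*} [Group G] [MulAction G α] {σ : Finset α → ℤˣ}
  (hσ : ∀ (g : G) S, σ (g • S) = inversionSign g S * σ S)
include hσ

lemma twistedKoszulDiff_comp_lmapDomain_smul (g : G) :
    twistedKoszulDiff R σ ∘ₗ Finsupp.lmapDomain R R (g • ·) =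
      Finsupp.lmapDomain R R (g • ·) ∘ₗ twistedKoszulDiff R σ := by
  refine LinearMap.ext fun f => ?_
  have hT : signTwist R σ (Finsupp.mapDomain (g • ·) f) =
      signedPerm R inversionSign g (signTwist R σ f) := by
    rw [← signTwist_signTwist σ (signedPerm R inversionSign g (signTwist R σ f)),
      signTwist_signedPerm hσ, signTwist_signTwist]
  simp only [twistedKoszulDiff, LinearMap.comp_apply, Finsupp.lmapDomain_apply]
  rw [hT, koszulDiff_signedPerm, signTwist_signedPerm hσ]

lemma cardBlock_twistedKoszulDiff_comp_lmapDomain_smul (g : G) (k : ℕ) :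
    cardBlock (twistedKoszulDiff R σ) k (k + 1) ∘ₗ Finsupp.lmapDomain R R (g • ·) =
      Finsupp.lmapDomain R R (g • ·) ∘ₗ cardBlock (twistedKoszulDiff R σ) k (k + 1) := by
  rw [← cardBlock_lmapDomain_smul, ← cardBlock_lmapDomain_smul,
    cardBlock_comp (mapsCard_lmapDomain_smul g _),
    cardBlock_comp (mapsCard_twistedKoszulDiff σ k), twistedKoszulDiff_comp_lmapDomain_smul hσ]

lemma cardBlock_twistedKoszulDiff_zero_mapDomain_smul (g : G) (f : powersetCard α 1 →₀ R) :
    cardBlock (twistedKoszulDiff R σ) 0 1 (Finsupp.mapDomain (g • ·) f) =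
      cardBlock (twistedKoszulDiff R σ) 0 1 f := by
  have h := congr($(cardBlock_twistedKoszulDiff_comp_lmapDomain_smul hσ g 0) f)
  simp only [LinearMap.comp_apply, Finsupp.lmapDomain_apply] at h
  rw [h, show (g • · : powersetCard α 0 → powersetCard α 0) = id from
    funext fun _ => Subsingleton.elim _ _, Finsupp.mapDomain_id]

end TwistedKoszul

/-- For a finite `p`-group `G` with `p` odd and a commutative ring `R`, the trivial module
`R` admits a finite resolution `0 → Pₙ → ⋯ → P₁ → P₀ → R → 0` by finitely generated
permutation `RG`-modules with `P₀` free (obtained from the Koszul complex of the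
augmentation `RG → R`).
Here, for `i ≥ 1`, `Cᵢ₊₁` is the linearization `A i →₀ R` of a finite `G`-set `A i`
(the `G`-action is encoded by `φ i : G →* Equiv.Perm (A i)`), the differentials are
`G`-equivariant, `ε : C₁ → C₀ = R` is equivariant for the trivial action on `R`, and
`A 0` is a free `G`-set, so that `C₁` is a free `RG`-module. -/
theorem stmt_12 (p : ℕ) (hp : p.Prime) (hodd : p ≠ 2)
    (G : Type) [Group G] [Fintype G] (n : ℕ) (hG : Fintype.card G = p ^ n)
    (R : Type) [CommRing R] :
    ∃ (N : ℕ) (A : ℕ → Type) (_ : ∀ i, Fintype (A i)) (φ : ∀ i, G →* Equiv.Perm (A i))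
      (d : ∀ i, ((A (i + 1) →₀ R) →ₗ[R] (A i →₀ R)))
      (ε : (A 0 →₀ R) →ₗ[R] R),
      -- bounded
      (∀ i, N ≤ i → IsEmpty (A i)) ∧
      -- the differentials are G-equivariant
      (∀ (i : ℕ) (g : G) (f : A (i + 1) →₀ R),
        d i (Finsupp.mapDomain (φ (i + 1) g) f) = Finsupp.mapDomain (φ i g) (d i f)) ∧
      -- ε is equivariant for the trivial action on C₀ = R
      (∀ (g : G) (f : A 0 →₀ R), ε (Finsupp.mapDomain (φ 0 g) f) = ε f) ∧
      -- exactness of 0 → Cₙ → ⋯ → C₁ → C₀ → 0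
      Function.Surjective ε ∧
      (LinearMap.ker ε = LinearMap.range (d 0)) ∧
      (∀ i, LinearMap.ker (d i) = LinearMap.range (d (i + 1))) ∧
      -- C₁ is a free RG-module: A 0 is a free G-set
      (∃ (r : ℕ) (e : A 0 ≃ (Fin r × G)),
        ∀ (g : G) (a : A 0), e (φ 0 g a) = ((e a).1, g * (e a).2)) := by
  have hGodd : Odd (Fintype.card G) := hG ▸ (hp.odd_of_ne_two hodd).pow
  let _ : LinearOrder G := LinearOrder.lift' _ (Fintype.equivFin G).injective
  obtain ⟨σ, hσ⟩ := exists_coboundary_of_odd_card hGodd _ (inversionSign_mul (α := G))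
  set D := twistedKoszulDiff R σ
  set ε₀ := Finsupp.uniqueLinearEquiv R R (Set.powersetCard.ofCard (α := G) card_empty)
  refine ⟨Fintype.card G, fun i => Set.powersetCard G (i + 1), fun i => inferInstance,
    fun i => MulAction.toPermHom G _, fun i => cardBlock D (i + 1) (i + 1 + 1),
    ε₀.toLinearMap ∘ₗ cardBlock D 0 1, fun i hi => ?_,
    fun i g f => congr($(cardBlock_twistedKoszulDiff_comp_lmapDomain_smul hσ g (i + 1)) f),
    fun g f => congrArg ε₀ (cardBlock_twistedKoszulDiff_zero_mapDomain_smul hσ g f),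
    ε₀.surjective.comp (surjective_cardBlock_twistedKoszulDiff_zero σ), ?_,
    fun i => ker_cardBlock_twistedKoszulDiff σ (i + 1), ?_⟩
  · exact Set.isEmpty_coe_sort.2 (Set.powersetCard.eq_empty_iff.2 (by
      rw [Nat.card_eq_fintype_card]; omega))
  · rw [LinearEquiv.ker_comp]
    exact ker_cardBlock_twistedKoszulDiff σ 0
  · refine ⟨1, Set.powersetCard.ofSingleton.symm.trans (Equiv.uniqueProd G (Fin 1)).symm,
      fun g a => Prod.ext (Subsingleton.elim _ _) ?_⟩
    exact Set.powersetCard.ofSingleton_symm_smul g a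
end
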